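/- For u ∈ (0,1), setting g(z,u) = u z^2 (S(z) − 1)/(1 − uz), the composition f(g(z,u)) with f(w) = w/(1 − uw) is subcritical: g(ρ, u) = u(1 − ρ − ρ^2)/(2(1 − uρ)) < 1 = the radius of convergence of f in w, where ρ = (3 − √5)/2. -/

import Mathlib

open Finset Filter Topology Asymptotics

/-- An RNA secondary structure of length `n`: a set of arcs `(i,j)`, `1 ≤ i < j ≤ n`,
which form a partial matching (no shared endpoints), are noncrossing, and contain
no 1-arc `(i,i+1)`. -/
def IsSecStr (n : ℕ) (A : Finset (ℕ × ℕ)) : Prop :=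
  (∀ p ∈ A, 1 ≤ p.1 ∧ p.1 < p.2 ∧ p.2 ≤ n ∧ p.2 ≠ p.1 + 1) ∧
  (∀ p ∈ A, ∀ q ∈ A, p ≠ q →
    p.1 ≠ q.1 ∧ p.1 ≠ q.2 ∧ p.2 ≠ q.1 ∧ p.2 ≠ q.2) ∧
  (∀ p ∈ A, ∀ q ∈ A, ¬ (p.1 < q.1 ∧ q.1 < p.2 ∧ p.2 < q.2))

/-- `s(n)`: the number of RNA secondary structures of length `n`. -/
noncomputable def secCount (n : ℕ) : ℕ :=
  Nat.card {A : Finset (ℕ × ℕ) // IsSecStr n A}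

/-- The diagram graph of a secondary structure: backbone edges `(i,i+1)` together
with the arcs, on vertices `1,…,n`. -/
def diagGraph (n : ℕ) (A : Finset (ℕ × ℕ)) : SimpleGraph ℕ where
  Adj i j := i ≠ j ∧ 1 ≤ i ∧ i ≤ n ∧ 1 ≤ j ∧ j ≤ n ∧
    (j = i + 1 ∨ i = j + 1 ∨ (i, j) ∈ A ∨ (j, i) ∈ A)
  symm := by
    constructor
    rintro i j ⟨h1, h2, h3, h4, h5, h6⟩
    exact ⟨h1.symm, h4, h5, h2, h3, by tauto⟩
  loopless := by constructor; rintro i ⟨h1, _⟩; exact h1 rfl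

/-- The 5'-3' distance of a secondary structure: the graph distance from
vertex `1` to vertex `n` in its diagram. -/
noncomputable def secDist (n : ℕ) (A : Finset (ℕ × ℕ)) : ℕ :=
  (diagGraph n A).dist 1 n

/-- `w(n,d)`: the number of secondary structures of length `n` with 5'-3' distance `d`. -/
noncomputable def wCount (n d : ℕ) : ℕ :=
  Nat.card {A : Finset (ℕ × ℕ) // IsSecStr n A ∧ secDist n A = d}

/-- The dominant singularity `ρ = (3 − √5)/2`. -/
noncomputable def rho : ℝ := (3 - Real.sqrt 5) / 2

/-- The generating function of RNA secondary structures, in closed form. -/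
noncomputable def Sfun (z : ℝ) : ℝ :=
  (1 - z + z ^ 2 - Real.sqrt ((z ^ 2 + z + 1) * (z ^ 2 - 3 * z + 1))) / (2 * z ^ 2)

/-- The bivariate generating function `W(z,u)`, in closed form. -/
noncomputable def Wfun (z u : ℝ) : ℝ :=
  u * z ^ 2 * (Sfun z - 1) /
    ((1 - z * u) ^ 2 - (1 - z * u) * (z * u) ^ 2 * (Sfun z - 1)) + z / (1 - z * u)

/-- `cov A j`: the number of arcs of `A` covering the gap between vertices `j` and `j+1`
(equivalently, the size of the shape of the associated 1-tableau at that gap). -/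
def cov (A : Finset (ℕ × ℕ)) (j : ℕ) : ℕ :=
  (A.filter (fun p => p.1 ≤ j ∧ j < p.2)).card

/-- An irreducible secondary structure: the associated tableau never returns to the
empty shape strictly between the two ends, i.e. every interior gap is covered by an arc. -/
def IsIrr (n : ℕ) (A : Finset (ℕ × ℕ)) : Prop :=
  IsSecStr n A ∧ 2 ≤ n ∧ ∀ j, 1 ≤ j → j ≤ n - 1 → 1 ≤ cov A j

/-- `i(n)`: the number of irreducible secondary structures of length `n`. -/
noncomputable def irrCount (n : ℕ) : ℕ :=
  Nat.card {A : Finset (ℕ × ℕ) // IsIrr n A}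

open Real

lemma one_lt_sqrt_five : 1 < √5 := by
  rw [Real.lt_sqrt zero_le_one]; norm_num

lemma sqrt_five_lt_three : √5 < 3 := by
  rw [Real.sqrt_lt' three_pos]; norm_num

lemma rho_pos : 0 < rho := by
  unfold rho; linarith [sqrt_five_lt_three]

lemma rho_lt_one : rho < 1 := by
  unfold rho; linarith [one_lt_sqrt_five]

lemma rho_sq : rho ^ 2 = 3 * rho - 1 := by
  have h5 : √5 ^ 2 = 5 := Real.sq_sqrt (by norm_num)
  unfold rho; linear_combination h5 / 4

/-- At `ρ` the discriminant vanishes, so `S` loses its square root. -/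
lemma Sfun_rho : Sfun rho = (1 - rho + rho ^ 2) / (2 * rho ^ 2) := by
  have hdisc : rho ^ 2 - 3 * rho + 1 = 0 := by linear_combination rho_sq
  rw [Sfun, hdisc, mul_zero, Real.sqrt_zero, sub_zero]

lemma rho_sq_mul_Sfun_rho_sub_one : rho ^ 2 * (Sfun rho - 1) = (1 - rho - rho ^ 2) / 2 := by
  rw [Sfun_rho]
  field_simp [rho_pos.ne']
  ring

lemma one_sub_rho_sub_rho_sq : 1 - rho - rho ^ 2 = 2 * (1 - 2 * rho) := by
  linear_combination -rho_sq

lemma mul_lt_one_of_lt_one_of_mem_Icc {u c : ℝ} (hu : u < 1) (hc0 : 0 ≤ c) (hc1 : c ≤ 1) :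
    u * c < 1 := by
  rcases le_or_gt u 0 with hu0 | hu0
  · nlinarith
  · nlinarith

theorem subcritical_general (u : ℝ) (hu1 : u < 1) :
    u * rho ^ 2 * (Sfun rho - 1) / (1 - u * rho) =
      u * (1 - rho - rho ^ 2) / (2 * (1 - u * rho)) ∧
    u * (1 - rho - rho ^ 2) / (2 * (1 - u * rho)) < 1 := by
  refine ⟨?_, ?_⟩
  · rw [mul_assoc, rho_sq_mul_Sfun_rho_sub_one, mul_div_assoc', div_div]
  · have hu_rho : u * rho < 1 :=
      mul_lt_one_of_lt_one_of_mem_Icc hu1 rho_pos.le rho_lt_one.le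
    have hu_one_sub_rho : u * (1 - rho) < 1 :=
      mul_lt_one_of_lt_one_of_mem_Icc hu1 (sub_nonneg.mpr rho_lt_one.le) (by linarith [rho_pos])
    have hden : 0 < 1 - u * rho := sub_pos.mpr hu_rho
    rw [div_lt_one (by positivity), one_sub_rho_sub_rho_sq]
    linarith

/-- Subcriticality: with `g(z,u) = uz²(S(z)−1)/(1−uz)`, one has
`g(ρ,u) = u(1−ρ−ρ²)/(2(1−uρ)) < 1` for `u ∈ (0,1)`. -/
theorem subcritical (u : ℝ) (hu0 : 0 < u) (hu1 : u < 1) :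
    u * rho ^ 2 * (Sfun rho - 1) / (1 - u * rho) =
      u * (1 - rho - rho ^ 2) / (2 * (1 - u * rho)) ∧
    u * (1 - rho - rho ^ 2) / (2 * (1 - u * rho)) < 1 :=
  subcritical_general u hu1
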